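/- Under the preservation of join value sets (π_X(L) = π_X(R)), a functional dependency S → T with S, T ⊆ A_L holds in the natural join J = L ⋈ R if and only if it holds in L. -/

import Mathlib

variable {α V : Type*}

/-- Restriction of a tuple over attribute set `A` to a subset `B`. -/
def restrict {A B : Set α} (h : B ⊆ A) (t : {a // a ∈ A} → V) : {b // b ∈ B} → V :=
  fun b => t ⟨b.1, h b.2⟩

/-- Two tuples over `A` agree on all attributes of `S`. -/
def AgreeOn {A : Set α} (t1 t2 : {a // a ∈ A} → V) (S : Set α) : Prop :=
  ∀ a : {a // a ∈ A}, a.1 ∈ S → t1 a = t2 a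

/-- The functional dependency `S → T` holds in the instance `I`. -/
def FDHolds {A : Set α} (I : Set ({a // a ∈ A} → V)) (S T : Set α) : Prop :=
  ∀ t1 ∈ I, ∀ t2 ∈ I, AgreeOn t1 t2 S → AgreeOn t1 t2 T

/-- Natural join of `L` (over `AL`) and `R` (over `AR`) on `AL ∩ AR`. -/
def Join (AL AR : Set α) (L : Set ({a // a ∈ AL} → V)) (R : Set ({a // a ∈ AR} → V)) :
    Set ({a // a ∈ AL ∪ AR} → V) :=
  {t | restrict Set.subset_union_left t ∈ L ∧ restrict Set.subset_union_right t ∈ R}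

/-! Since `π_X(L) = π_X(R)`, every `L`-tuple has an `R`-partner agreeing with it on `X`;
gluing the two shows that the join projects onto all of `L`, and an FD on attributes of
`A_L` only sees this projection. -/

section Restrict

variable {A B : Set α} {t1 t2 : {a // a ∈ A} → V} {S T : Set α}

theorem AgreeOn.restrict (h : B ⊆ A) (hag : AgreeOn t1 t2 S) :
    AgreeOn (restrict h t1) (restrict h t2) S :=
  fun b hb => hag ⟨b.1, h b.2⟩ hb

theorem agreeOn_restrict_iff (h : B ⊆ A) (hS : S ⊆ B) :
    AgreeOn (restrict h t1) (restrict h t2) S ↔ AgreeOn t1 t2 S :=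
  ⟨fun hag a ha => hag ⟨a.1, hS ha⟩ ha, AgreeOn.restrict h⟩

theorem FDHolds.of_mapsTo_restrict {I : Set ({a // a ∈ A} → V)} {J : Set ({b // b ∈ B} → V)}
    (h : B ⊆ A) (hIJ : Set.MapsTo (restrict h) I J) (hT : T ⊆ B) (hJ : FDHolds J S T) :
    FDHolds I S T := fun _ ht1 _ ht2 hag =>
  (agreeOn_restrict_iff h hT).1 (hJ _ (hIJ ht1) _ (hIJ ht2) (hag.restrict h))

theorem FDHolds.of_surjOn_restrict {I : Set ({a // a ∈ A} → V)} {J : Set ({b // b ∈ B} → V)}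
    (h : B ⊆ A) (hIJ : Set.SurjOn (restrict h) I J) (hS : S ⊆ B) (hI : FDHolds I S T) :
    FDHolds J S T := by
  rintro _ ht1 _ ht2 hag
  obtain ⟨u1, hu1, rfl⟩ := hIJ ht1
  obtain ⟨u2, hu2, rfl⟩ := hIJ ht2
  exact (hI u1 hu1 u2 hu2 ((agreeOn_restrict_iff h hS).1 hag)).restrict h

end Restrict

section Glue

variable {AL AR : Set α}

open Classical in
noncomputable def glue (t : {a // a ∈ AL} → V) (r : {a // a ∈ AR} → V) :
    {a // a ∈ AL ∪ AR} → V :=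
  fun a => if h : a.1 ∈ AL then t ⟨a.1, h⟩ else r ⟨a.1, a.2.resolve_left h⟩

theorem restrict_left_glue (t : {a // a ∈ AL} → V) (r : {a // a ∈ AR} → V) :
    restrict Set.subset_union_left (glue t r) = t := by
  funext a
  simp [restrict, glue, a.2]

theorem restrict_right_glue {t : {a // a ∈ AL} → V} {r : {a // a ∈ AR} → V}
    (htr : restrict Set.inter_subset_left t = restrict Set.inter_subset_right r) :
    restrict Set.subset_union_right (glue t r) = r := by
  funext a
  by_cases ha : a.1 ∈ AL
  · simpa [restrict, glue, ha] using congrFun htr ⟨a.1, ha, a.2⟩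
  · simp [restrict, glue, ha]

theorem surjOn_restrict_join_left {L : Set ({a // a ∈ AL} → V)} {R : Set ({a // a ∈ AR} → V)}
    (hX : restrict Set.inter_subset_left '' L = restrict Set.inter_subset_right '' R) :
    Set.SurjOn (restrict Set.subset_union_left) (Join AL AR L R) L := by
  intro t ht
  obtain ⟨r, hr, hrt⟩ : restrict Set.inter_subset_left t ∈ restrict Set.inter_subset_right '' R :=
    hX ▸ Set.mem_image_of_mem _ ht
  refine ⟨glue t r, ⟨?_, ?_⟩, restrict_left_glue t r⟩
  · rwa [restrict_left_glue]
  · rwa [restrict_right_glue hrt.symm]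

end Glue

theorem fd_iff_under_value_set_preservation_general (AL AR : Set α)
    (L : Set ({a // a ∈ AL} → V)) (R : Set ({a // a ∈ AR} → V))
    (hX : restrict (Set.inter_subset_left : AL ∩ AR ⊆ AL) '' L =
          restrict (Set.inter_subset_right : AL ∩ AR ⊆ AR) '' R)
    (S T : Set α) (hS : S ⊆ AL) (hT : T ⊆ AL) :
    FDHolds (Join AL AR L R) S T ↔ FDHolds L S T :=
  ⟨FDHolds.of_surjOn_restrict _ (surjOn_restrict_join_left hX) hS,
    FDHolds.of_mapsTo_restrict _ (fun _ hu => hu.1) hT⟩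

/-- Under preservation of join value sets (`π_X(L) = π_X(R)`), an FD `S → T` with
`S, T ⊆ A_L` holds in the natural join iff it holds in `L`. -/
theorem fd_iff_under_value_set_preservation [Nonempty V] (AL AR : Set α)
    (L : Set ({a // a ∈ AL} → V)) (R : Set ({a // a ∈ AR} → V))
    (hX : restrict (Set.inter_subset_left : AL ∩ AR ⊆ AL) '' L =
          restrict (Set.inter_subset_right : AL ∩ AR ⊆ AR) '' R)
    (S T : Set α) (hS : S ⊆ AL) (hT : T ⊆ AL) :
    FDHolds (Join AL AR L R) S T ↔ FDHolds L S T :=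
  fd_iff_under_value_set_preservation_general AL AR L R hX S T hS hT
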